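/- arXiv:2502.14754 — 4 statements merged into one kernel-verified Lean document; each statement's English description precedes it below -/
import Mathlib

section
/- Extended Boundary Crossing Theorem: Let p_t(z) = a_n(t)z^n + ⋯ + a₁(t)z + a₀(t), t ∈ [a,b], be a family of polynomials where each coefficient function a_j : [a,b] → ℂ is continuous. If p_a(z) is Hurwitz stable and a_n(t) ≠ 0 for every t ∈ [a,b), then either p_t(z) is Hurwitz stable for every t ∈ [a,b], or there exists (t⋆, ω⋆) ∈ (a,b] × ℝ such that p_{t⋆}(iω⋆) = 0. -/
/-!
The set of parameters `t ∈ [a, b]` at which `p_t` is Hurwitz stable contains `a`; if no `p_t` with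
`t ∈ (a, b]` has a root on the imaginary axis, it is closed and open to the right inside `[a, b)`,
hence all of `[a, b]` by continuous induction.

Openness: where the leading coefficient does not vanish, the Cauchy bound keeps the roots of
nearby `p_t` in a fixed disc, and the compactness of the closed right half of that disc rules out
roots there for `t` close enough.

Closedness: if all roots of `q` of degree `≤ n` lie in the closed left half-plane and `Re z > 0`,
then every root factor satisfies `‖w - r‖ ≤ ‖z - r‖ (1 + ‖w - z‖ / Re z)`, so
`‖q w‖ ≤ ‖q z‖ (1 + ‖w - z‖ / Re z) ^ n`. Passing to the limit, a limit of stable polynomials that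
vanishes at a point of the open right half-plane vanishes identically, in particular at `0`.
-/

open Polynomial

/-- A (complex) polynomial is Hurwitz stable if all its roots lie in the
open left half-plane. -/
def HurwitzStable (p : Polynomial ℂ) : Prop :=
  ∀ z : ℂ, p.eval z = 0 → z.re < 0

/-- The complex polynomial `∑_{i=0}^n c i * z^i` built from a coefficient function. -/
noncomputable def polyOfCoeffsC (n : ℕ) (c : ℕ → ℂ) : Polynomial ℂ :=
  ∑ i ∈ Finset.range (n + 1), Polynomial.C (c i) * Polynomial.X ^ i

open Filter Topology Set NNReal

lemma coeff_polyOfCoeffsC (n : ℕ) (c : ℕ → ℂ) (i : ℕ) :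
    (polyOfCoeffsC n c).coeff i = if i ≤ n then c i else 0 := by
  simp [polyOfCoeffsC]

lemma natDegree_polyOfCoeffsC_le (n : ℕ) (c : ℕ → ℂ) : (polyOfCoeffsC n c).natDegree ≤ n :=
  natDegree_le_iff_coeff_eq_zero.2 fun i hi => by
    simp [coeff_polyOfCoeffsC, not_le.2 hi]

lemma tendsto_coeff_polyOfCoeffsC {α : Type*} [TopologicalSpace α] {n : ℕ} {c : ℕ → α → ℂ}
    {s : Set α} (hcont : ∀ j ≤ n, ContinuousOn (fun t => c j t) s) {x : α} (hx : x ∈ s) (i : ℕ) :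
    Tendsto (fun t => (polyOfCoeffsC n fun j => c j t).coeff i) (𝓝[s] x)
      (𝓝 ((polyOfCoeffsC n fun j => c j x).coeff i)) := by
  simp only [coeff_polyOfCoeffsC]
  split_ifs with hi
  · exact hcont i hi x hx
  · exact tendsto_const_nhds

lemma Complex.norm_sub_le_mul_of_re_nonpos {z w r : ℂ} (hz : 0 < z.re) (hr : r.re ≤ 0) :
    ‖w - r‖ ≤ ‖z - r‖ * (1 + ‖w - z‖ / z.re) := by
  have hzr : z.re ≤ ‖z - r‖ := by
    calc z.re ≤ (z - r).re := by simp; linarith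
      _ ≤ ‖z - r‖ := Complex.re_le_norm _
  calc ‖w - r‖ ≤ ‖w - z‖ + ‖z - r‖ := norm_sub_le_norm_sub_add_norm_sub w z r
    _ = ‖z - r‖ + z.re * (‖w - z‖ / z.re) := by field_simp; ring
    _ ≤ ‖z - r‖ + ‖z - r‖ * (‖w - z‖ / z.re) := by gcongr
    _ = ‖z - r‖ * (1 + ‖w - z‖ / z.re) := by ring

lemma HurwitzStable.norm_eval_le {q : ℂ[X]} {n : ℕ} (hq : HurwitzStable q) (hdeg : q.natDegree ≤ n)
    {z : ℂ} (hz : 0 < z.re) (w : ℂ) :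
    ‖q.eval w‖ ≤ ‖q.eval z‖ * (1 + ‖w - z‖ / z.re) ^ n := by
  have hsplit := IsAlgClosed.splits q
  set C := 1 + ‖w - z‖ / z.re
  have hC : 1 ≤ C := le_add_of_nonneg_right (by positivity)
  have hnorm (x : ℂ) :
      ‖q.eval x‖ = ‖q.leadingCoeff‖ * (q.roots.map fun r => ‖x - r‖).prod := by
    rw [hsplit.eval_eq_prod_roots, norm_mul, ← normHom_apply (_ : Multiset ℂ).prod,
      map_multiset_prod, Multiset.map_map]
    rfl
  rw [hnorm, hnorm]
  calc ‖q.leadingCoeff‖ * (q.roots.map fun r => ‖w - r‖).prod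
      ≤ ‖q.leadingCoeff‖ * (q.roots.map fun r => ‖z - r‖ * C).prod := by
        gcongr
        exact Multiset.prod_map_le_prod_map₀ _ _ (fun _ _ => norm_nonneg _) fun r hr =>
          Complex.norm_sub_le_mul_of_re_nonpos hz (hq r (isRoot_of_mem_roots hr)).le
    _ = ‖q.leadingCoeff‖ * (q.roots.map fun r => ‖z - r‖).prod * C ^ q.natDegree := by
        rw [Multiset.prod_map_mul, Multiset.map_const', Multiset.prod_replicate,
          hsplit.natDegree_eq_card_roots, mul_assoc]
    _ ≤ ‖q.leadingCoeff‖ * (q.roots.map fun r => ‖z - r‖).prod * C ^ n :=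
        mul_le_mul_of_nonneg_left (pow_le_pow_right₀ hC hdeg) (by rw [← hnorm]; positivity)

lemma cauchyBound_le {K : Type*} [NormedDivisionRing K] {p : K[X]} {m B : ℝ≥0}
    (hm : 0 < m) (hlead : m ≤ ‖p.leadingCoeff‖₊) (hcoeff : ∀ i < p.natDegree, ‖p.coeff i‖₊ ≤ B) :
    p.cauchyBound ≤ B / m + 1 := by
  unfold cauchyBound
  gcongr
  exact Finset.sup_le fun i hi => hcoeff i (Finset.mem_range.1 hi)

section CoeffTendsto

variable {ι : Type*} {l : Filter ι} {p : ι → ℂ[X]} {q : ℂ[X]} {n : ℕ}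

lemma tendsto_eval_of_tendsto_coeff (hdeg : ∀ t, (p t).natDegree ≤ n) (hqdeg : q.natDegree ≤ n)
    (hcoeff : ∀ i, Tendsto (fun t => (p t).coeff i) l (𝓝 (q.coeff i))) (z : ℂ) :
    Tendsto (fun x : ι × ℂ => (p x.1).eval x.2) (l ×ˢ 𝓝 z) (𝓝 (q.eval z)) := by
  simp only [eval_eq_sum_range' (Nat.lt_succ_of_le (hdeg _)),
    eval_eq_sum_range' (Nat.lt_succ_of_le hqdeg)]
  exact tendsto_finsetSum _ fun i _ =>
    ((hcoeff i).comp tendsto_fst).mul (tendsto_snd.pow i)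

lemma eventually_nnnorm_le_of_isRoot (hdeg : ∀ t, (p t).natDegree ≤ n) (hqn : q.coeff n ≠ 0)
    (hcoeff : ∀ i, Tendsto (fun t => (p t).coeff i) l (𝓝 (q.coeff i))) :
    ∃ R : ℝ≥0, ∀ᶠ t in l, ∀ z, (p t).IsRoot z → ‖z‖₊ ≤ R := by
  set m : ℝ≥0 := ‖q.coeff n‖₊ / 2
  set B : ℝ≥0 := ∑ i ∈ Finset.range n, (‖q.coeff i‖₊ + 1)
  have hqn' : 0 < ‖q.coeff n‖₊ := nnnorm_pos.2 hqn
  have hm : 0 < m := half_pos hqn'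
  have hlead : ∀ᶠ t in l, m < ‖(p t).coeff n‖₊ :=
    (hcoeff n).nnnorm.eventually_const_lt (half_lt_self hqn')
  have hlower : ∀ᶠ t in l, ∀ i ∈ Finset.range n, ‖(p t).coeff i‖₊ < ‖q.coeff i‖₊ + 1 :=
    (Filter.eventually_all_finset _).2 fun i _ =>
      (hcoeff i).nnnorm.eventually_lt_const (lt_add_one _)
  refine ⟨B / m + 1, ?_⟩
  filter_upwards [hlead, hlower] with t hlt hlow z hz
  have hpn : (p t).coeff n ≠ 0 := nnnorm_pos.1 (hm.trans hlt)
  have hnat : (p t).natDegree = n := natDegree_eq_of_le_of_coeff_ne_zero (hdeg t) hpn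
  refine (hz.norm_lt_cauchyBound (fun h => hpn (by simp [h]))).le.trans (cauchyBound_le hm ?_ ?_)
  · rw [leadingCoeff, hnat]
    exact hlt.le
  · intro i hi
    rw [hnat, ← Finset.mem_range] at hi
    exact (hlow i hi).le.trans
      (Finset.single_le_sum (f := fun i => ‖q.coeff i‖₊ + 1) (fun _ _ => zero_le) hi)

lemma HurwitzStable.eventually_of_tendsto_coeff (hdeg : ∀ t, (p t).natDegree ≤ n)
    (hqdeg : q.natDegree ≤ n) (hcoeff : ∀ i, Tendsto (fun t => (p t).coeff i) l (𝓝 (q.coeff i)))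
    (hqn : q.coeff n ≠ 0) (hq : HurwitzStable q) : ∀ᶠ t in l, HurwitzStable (p t) := by
  obtain ⟨R, hR⟩ := eventually_nnnorm_le_of_isRoot hdeg hqn hcoeff
  set K := Metric.closedBall (0 : ℂ) R ∩ {z | 0 ≤ z.re}
  have hK : IsCompact K :=
    (isCompact_closedBall _ _).inter_right (isClosed_le continuous_const Complex.continuous_re)
  have hnoroot : ∀ᶠ t in l, ∀ z ∈ K, (p t).eval z ≠ 0 := by
    have hnear : ∀ᶠ x : ι × ℂ in l ×ˢ 𝓝ˢ K, (p x.1).eval x.2 ≠ 0 :=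
      hK.mem_prod_nhdsSet_of_forall fun y hy =>
        (tendsto_eval_of_tendsto_coeff hdeg hqdeg hcoeff y).eventually_ne
          fun h => (hq y h).not_ge hy.2
    exact hnear.curry.mono fun t ht => ht.self_of_nhdsSet
  filter_upwards [hR, hnoroot] with t hbound hno z hz
  by_contra! hre
  exact hno z ⟨mem_closedBall_zero_iff.2 (hbound z hz), hre⟩ hz

lemma eq_zero_of_tendsto_eval [l.NeBot]
    (heval : ∀ w, Tendsto (fun t => (p t).eval w) l (𝓝 (q.eval w)))
    (hdeg : ∀ t, (p t).natDegree ≤ n) (hstab : ∀ᶠ t in l, HurwitzStable (p t)) {z : ℂ}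
    (hz : q.eval z = 0) (hre : 0 < z.re) : q = 0 := by
  refine Polynomial.funext fun w => ?_
  rw [eval_zero, ← norm_le_zero_iff]
  have hbound : Tendsto (fun t => ‖(p t).eval z‖ * (1 + ‖w - z‖ / z.re) ^ n) l (𝓝 0) := by
    simpa [hz] using (heval z).norm.mul_const ((1 + ‖w - z‖ / z.re) ^ n)
  simpa using le_of_tendsto_of_tendsto (heval w).norm hbound
    (hstab.mono fun t ht => ht.norm_eval_le (hdeg t) hre w)

lemma hurwitzStable_of_tendsto_coeff [l.NeBot] (hdeg : ∀ t, (p t).natDegree ≤ n)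
    (hqdeg : q.natDegree ≤ n) (hcoeff : ∀ i, Tendsto (fun t => (p t).coeff i) l (𝓝 (q.coeff i)))
    (hstab : ∀ᶠ t in l, HurwitzStable (p t)) (himag : ∀ ω : ℝ, q.eval (Complex.I * ω) ≠ 0) :
    HurwitzStable q := by
  intro z hz
  by_contra! hre
  rcases hre.eq_or_lt with hre | hre
  · refine himag z.im ?_
    rwa [show Complex.I * z.im = z from Complex.ext (by simp [← hre]) (by simp)]
  · have heval w := (tendsto_eval_of_tendsto_coeff hdeg hqdeg hcoeff w).comp
      (tendsto_id.prodMk (tendsto_const_nhds (x := w)))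
    have hq0 := eq_zero_of_tendsto_eval heval hdeg hstab hz hre
    exact himag 0 (by simp [hq0])

end CoeffTendsto

theorem extended_boundary_crossing_general (n : ℕ) (a b : ℝ)
    (c : ℕ → ℝ → ℂ) (hcont : ∀ j ≤ n, ContinuousOn (fun t => c j t) (Set.Icc a b))
    (hstable : HurwitzStable (polyOfCoeffsC n (fun j => c j a)))
    (hlead : ∀ t ∈ Set.Ico a b, c n t ≠ 0) :
    (∀ t ∈ Set.Icc a b, HurwitzStable (polyOfCoeffsC n (fun j => c j t))) ∨
      ∃ t ∈ Set.Ioc a b, ∃ ω : ℝ,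
        (polyOfCoeffsC n (fun j => c j t)).eval (Complex.I * ω) = 0 := by
  refine or_iff_not_imp_right.2 fun hcross => ?_
  have hdeg t := natDegree_polyOfCoeffsC_le n fun j => c j t
  set S := {t | HurwitzStable (polyOfCoeffsC n fun j => c j t)}
  refine IsClosed.Icc_subset_of_forall_mem_nhdsWithin (s := S) ?_ hstable ?_
  · refine isClosed_of_closure_subset fun T hT => ?_
    have hTab : T ∈ Icc a b := closure_minimal inter_subset_right isClosed_Icc hT
    refine ⟨?_, hTab⟩
    rcases hTab.1.eq_or_lt with rfl | haT
    · exact hstable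
    have := mem_closure_iff_nhdsWithin_neBot.1 hT
    exact hurwitzStable_of_tendsto_coeff hdeg (hdeg T)
      (fun i => (tendsto_coeff_polyOfCoeffsC hcont hTab i).mono_left
        (nhdsWithin_mono _ inter_subset_right))
      (mem_of_superset self_mem_nhdsWithin inter_subset_left)
      fun ω h => hcross ⟨T, ⟨haT, hTab.2⟩, ω, h⟩
  · rintro x ⟨hx, hxab⟩
    refine nhdsWithin_le_of_mem (Icc_mem_nhdsGT_of_mem hxab) ?_
    refine hx.eventually_of_tendsto_coeff hdeg (hdeg x)
      (tendsto_coeff_polyOfCoeffsC hcont (Ico_subset_Icc_self hxab)) ?_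
    simpa [coeff_polyOfCoeffsC] using hlead x hxab

/-- **Extended Boundary Crossing Theorem.** Let `p_t(z) = a_n(t)z^n + ⋯ + a_0(t)`,
`t ∈ [a,b]`, be a family of polynomials whose coefficient functions are continuous
on `[a,b]`.  If `p_a` is Hurwitz stable and `a_n(t) ≠ 0` for every `t ∈ [a,b)`,
then either `p_t` is Hurwitz stable for every `t ∈ [a,b]`, or there exists
`(t⋆, ω⋆) ∈ (a,b] × ℝ` with `p_{t⋆}(iω⋆) = 0`. -/
theorem extended_boundary_crossing (n : ℕ) (a b : ℝ) (hab : a ≤ b)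
    (c : ℕ → ℝ → ℂ) (hcont : ∀ j ≤ n, ContinuousOn (fun t => c j t) (Set.Icc a b))
    (hstable : HurwitzStable (polyOfCoeffsC n (fun j => c j a)))
    (hlead : ∀ t ∈ Set.Ico a b, c n t ≠ 0) :
    (∀ t ∈ Set.Icc a b, HurwitzStable (polyOfCoeffsC n (fun j => c j t))) ∨
      ∃ t ∈ Set.Ioc a b, ∃ ω : ℝ,
        (polyOfCoeffsC n (fun j => c j t)).eval (Complex.I * ω) = 0 :=
  extended_boundary_crossing_general n a b c hcont hstable hlead
end

section
/- Kharitonov rectangle: If the four Kharitonov polynomials k₁, k₂, k₃, k₄ associated with an interval polynomial P of order n are all Hurwitz stable and a_n⁺ > 0, then for every ω ≥ 0 the value set K(iω) = {p(iω) : p ∈ P} equals the rectangle {x + iy : h₋(ω) ≤ x ≤ h₊(ω), g₋(ω) ≤ y ≤ g₊(ω)}. -/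
open Polynomial

/-- The real polynomial `∑_{i=0}^n c i * z^i` built from a coefficient function. -/
noncomputable def polyOfCoeffs (n : ℕ) (c : ℕ → ℝ) : Polynomial ℝ :=
  ∑ i ∈ Finset.range (n + 1), Polynomial.C (c i) * Polynomial.X ^ i

/-- Coefficients of the first Kharitonov polynomial: pattern −,−,+,+. -/
def k1c (am ap : ℕ → ℝ) (i : ℕ) : ℝ :=
  if i % 4 = 0 ∨ i % 4 = 1 then am i else ap i

/-- Coefficients of the second Kharitonov polynomial: pattern +,−,−,+. -/
def k2c (am ap : ℕ → ℝ) (i : ℕ) : ℝ :=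
  if i % 4 = 1 ∨ i % 4 = 2 then am i else ap i

/-- Coefficients of the third Kharitonov polynomial: pattern +,+,−,−. -/
def k3c (am ap : ℕ → ℝ) (i : ℕ) : ℝ :=
  if i % 4 = 2 ∨ i % 4 = 3 then am i else ap i

/-- Coefficients of the fourth Kharitonov polynomial: pattern −,+,+,−. -/
def k4c (am ap : ℕ → ℝ) (i : ℕ) : ℝ :=
  if i % 4 = 3 ∨ i % 4 = 0 then am i else ap i

/-- `h₋(ω) = a₀⁻ − a₂⁺ω² + a₄⁻ω⁴ − ⋯`. -/
noncomputable def hMinus (n : ℕ) (am ap : ℕ → ℝ) (ω : ℝ) : ℝ :=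
  ∑ i ∈ Finset.range (n + 1),
    if i % 4 = 0 then am i * ω ^ i else if i % 4 = 2 then -(ap i * ω ^ i) else 0

/-- `h₊(ω) = a₀⁺ − a₂⁻ω² + a₄⁺ω⁴ − ⋯`. -/
noncomputable def hPlus (n : ℕ) (am ap : ℕ → ℝ) (ω : ℝ) : ℝ :=
  ∑ i ∈ Finset.range (n + 1),
    if i % 4 = 0 then ap i * ω ^ i else if i % 4 = 2 then -(am i * ω ^ i) else 0

/-- `g₋(ω) = a₁⁻ω − a₃⁺ω³ + a₅⁻ω⁵ − ⋯`. -/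
noncomputable def gMinus (n : ℕ) (am ap : ℕ → ℝ) (ω : ℝ) : ℝ :=
  ∑ i ∈ Finset.range (n + 1),
    if i % 4 = 1 then am i * ω ^ i else if i % 4 = 3 then -(ap i * ω ^ i) else 0

/-- `g₊(ω) = a₁⁺ω − a₃⁻ω³ + a₅⁺ω⁵ − ⋯`. -/
noncomputable def gPlus (n : ℕ) (am ap : ℕ → ℝ) (ω : ℝ) : ℝ :=
  ∑ i ∈ Finset.range (n + 1),
    if i % 4 = 1 then ap i * ω ^ i else if i % 4 = 3 then -(am i * ω ^ i) else 0

/-!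
At `z = iω` the coefficients with `i ≡ 0, 2 (mod 4)` contribute `± aᵢ ωⁱ` to the real part of
`p(iω)` and those with `i ≡ 1, 3 (mod 4)` contribute `± aᵢ ωⁱ` to the imaginary part. As
`ωⁱ ≥ 0`, each coefficient moves one coordinate monotonically, which gives the bounds
`h₋ ≤ Re p(iω) ≤ h₊` and `g₋ ≤ Im p(iω) ≤ g₊`. Conversely, since the two coordinates depend on
disjoint sets of coefficients, interpolating the even coefficients between their extreme choices
with a parameter `t` and the odd ones with an independent parameter `s` reaches every point
`((1 - t) h₋ + t h₊) + i ((1 - s) g₋ + s g₊)` of the rectangle.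
-/

open Complex

namespace Kharitonov

lemma eval_map_polyOfCoeffs (n : ℕ) (a : ℕ → ℝ) (z : ℂ) :
    ((polyOfCoeffs n a).map (algebraMap ℝ ℂ)).eval z =
      ∑ i ∈ Finset.range (n + 1), (a i : ℂ) * z ^ i := by
  simp [polyOfCoeffs, Polynomial.map_sum, Polynomial.eval_finsetSum]

lemma mod_four_cases (i : ℕ) : i % 4 = 0 ∨ i % 4 = 1 ∨ i % 4 = 2 ∨ i % 4 = 3 := by
  omega

lemma re_ofReal_mul_I_mul_pow (c ω : ℝ) (i : ℕ) :
    ((c : ℂ) * (I * ω) ^ i).re =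
      if i % 4 = 0 then c * ω ^ i else if i % 4 = 2 then -(c * ω ^ i) else 0 := by
  rw [mul_pow, I_pow_eq_pow_mod]
  rcases mod_four_cases i with h | h | h | h <;>
    simp [h, pow_succ, mul_re, mul_im, ← ofReal_pow]

lemma im_ofReal_mul_I_mul_pow (c ω : ℝ) (i : ℕ) :
    ((c : ℂ) * (I * ω) ^ i).im =
      if i % 4 = 1 then c * ω ^ i else if i % 4 = 3 then -(c * ω ^ i) else 0 := by
  rw [mul_pow, I_pow_eq_pow_mod]
  rcases mod_four_cases i with h | h | h | h <;>
    simp [h, pow_succ, mul_re, mul_im, ← ofReal_pow]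

lemma re_eval_I_mul (n : ℕ) (a : ℕ → ℝ) (ω : ℝ) :
    (((polyOfCoeffs n a).map (algebraMap ℝ ℂ)).eval (I * ω)).re =
      ∑ i ∈ Finset.range (n + 1),
        if i % 4 = 0 then a i * ω ^ i else if i % 4 = 2 then -(a i * ω ^ i) else 0 := by
  rw [eval_map_polyOfCoeffs, re_sum]
  exact Finset.sum_congr rfl fun i _ => re_ofReal_mul_I_mul_pow (a i) ω i

lemma im_eval_I_mul (n : ℕ) (a : ℕ → ℝ) (ω : ℝ) :
    (((polyOfCoeffs n a).map (algebraMap ℝ ℂ)).eval (I * ω)).im =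
      ∑ i ∈ Finset.range (n + 1),
        if i % 4 = 1 then a i * ω ^ i else if i % 4 = 3 then -(a i * ω ^ i) else 0 := by
  rw [eval_map_polyOfCoeffs, im_sum]
  exact Finset.sum_congr rfl fun i _ => im_ofReal_mul_I_mul_pow (a i) ω i

section Bounds

variable {n : ℕ} {am ap a : ℕ → ℝ} {ω : ℝ}

lemma re_eval_I_mul_mem_Icc (hω : 0 ≤ ω) (ha : ∀ i ≤ n, a i ∈ Set.Icc (am i) (ap i)) :
    (((polyOfCoeffs n a).map (algebraMap ℝ ℂ)).eval (I * ω)).re ∈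
      Set.Icc (hMinus n am ap ω) (hPlus n am ap ω) := by
  rw [re_eval_I_mul]
  constructor <;> refine Finset.sum_le_sum fun i hi => ?_ <;>
  · obtain ⟨hl, hu⟩ := ha i (Nat.lt_succ_iff.mp (Finset.mem_range.mp hi))
    have := pow_nonneg hω i
    rcases mod_four_cases i with h | h | h | h <;> simp only [h, Nat.reduceEqDiff, ↓reduceIte] <;> nlinarith

lemma im_eval_I_mul_mem_Icc (hω : 0 ≤ ω) (ha : ∀ i ≤ n, a i ∈ Set.Icc (am i) (ap i)) :
    (((polyOfCoeffs n a).map (algebraMap ℝ ℂ)).eval (I * ω)).im ∈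
      Set.Icc (gMinus n am ap ω) (gPlus n am ap ω) := by
  rw [im_eval_I_mul]
  constructor <;> refine Finset.sum_le_sum fun i hi => ?_ <;>
  · obtain ⟨hl, hu⟩ := ha i (Nat.lt_succ_iff.mp (Finset.mem_range.mp hi))
    have := pow_nonneg hω i
    rcases mod_four_cases i with h | h | h | h <;> simp only [h, Nat.reduceEqDiff, ↓reduceIte] <;> nlinarith

end Bounds

/-- At `t = s = 0` these are the coefficients of `k₁`, whose value at `iω` is the corner
`h₋(ω) + i g₋(ω)`; at `t = s = 1` those of `k₃`, with value `h₊(ω) + i g₊(ω)`. -/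
def interpCoeffs (am ap : ℕ → ℝ) (t s : ℝ) (i : ℕ) : ℝ :=
  if i % 4 = 0 then (1 - t) * am i + t * ap i
  else if i % 4 = 1 then (1 - s) * am i + s * ap i
  else if i % 4 = 2 then (1 - t) * ap i + t * am i
  else (1 - s) * ap i + s * am i

section Interpolation

variable {am ap : ℕ → ℝ} {t s : ℝ}

lemma interpCoeffs_mem_Icc (ht : t ∈ Set.Icc (0 : ℝ) 1) (hs : s ∈ Set.Icc (0 : ℝ) 1) {i : ℕ}
    (hi : am i ≤ ap i) : interpCoeffs am ap t s i ∈ Set.Icc (am i) (ap i) := by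
  obtain ⟨ht0, ht1⟩ := ht
  obtain ⟨hs0, hs1⟩ := hs
  unfold interpCoeffs
  constructor <;> rcases mod_four_cases i with h | h | h | h <;> simp only [h, Nat.reduceEqDiff, ↓reduceIte] <;> nlinarith

lemma re_eval_I_mul_interpCoeffs (n : ℕ) (ω : ℝ) :
    (((polyOfCoeffs n (interpCoeffs am ap t s)).map (algebraMap ℝ ℂ)).eval (I * ω)).re =
      (1 - t) * hMinus n am ap ω + t * hPlus n am ap ω := by
  rw [re_eval_I_mul, hMinus, hPlus, Finset.mul_sum, Finset.mul_sum, ← Finset.sum_add_distrib]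
  refine Finset.sum_congr rfl fun i _ => ?_
  unfold interpCoeffs
  rcases mod_four_cases i with h | h | h | h <;> simp only [h, Nat.reduceEqDiff, ↓reduceIte] <;> ring

lemma im_eval_I_mul_interpCoeffs (n : ℕ) (ω : ℝ) :
    (((polyOfCoeffs n (interpCoeffs am ap t s)).map (algebraMap ℝ ℂ)).eval (I * ω)).im =
      (1 - s) * gMinus n am ap ω + s * gPlus n am ap ω := by
  rw [im_eval_I_mul, gMinus, gPlus, Finset.mul_sum, Finset.mul_sum, ← Finset.sum_add_distrib]
  refine Finset.sum_congr rfl fun i _ => ?_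
  unfold interpCoeffs
  rcases mod_four_cases i with h | h | h | h <;> simp only [h, Nat.reduceEqDiff, ↓reduceIte] <;> ring

end Interpolation

lemma exists_mem_Icc_lerp_eq {l u x : ℝ} (hx : x ∈ Set.Icc l u) :
    ∃ t ∈ Set.Icc (0 : ℝ) 1, (1 - t) * l + t * u = x := by
  have hseg : x ∈ segment ℝ l u := Icc_subset_segment hx
  rw [segment_eq_image] at hseg
  simpa only [smul_eq_mul, Set.mem_image] using hseg

end Kharitonov

open Kharitonov

theorem kharitonov_rectangle_general (n : ℕ) (am ap : ℕ → ℝ)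
    (hle : ∀ i ≤ n, am i ≤ ap i) (ω : ℝ) (hω : 0 ≤ ω) :
    {z : ℂ | ∃ a : ℕ → ℝ, (∀ i ≤ n, a i ∈ Set.Icc (am i) (ap i)) ∧
        z = ((polyOfCoeffs n a).map (algebraMap ℝ ℂ)).eval (Complex.I * ω)} =
      {z : ℂ | hMinus n am ap ω ≤ z.re ∧ z.re ≤ hPlus n am ap ω ∧
        gMinus n am ap ω ≤ z.im ∧ z.im ≤ gPlus n am ap ω} := by
  ext z
  constructor
  · rintro ⟨a, ha, rfl⟩
    obtain ⟨hre₁, hre₂⟩ := re_eval_I_mul_mem_Icc hω ha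
    obtain ⟨him₁, him₂⟩ := im_eval_I_mul_mem_Icc hω ha
    exact ⟨hre₁, hre₂, him₁, him₂⟩
  · rintro ⟨hre₁, hre₂, him₁, him₂⟩
    obtain ⟨t, ht, hre⟩ := exists_mem_Icc_lerp_eq ⟨hre₁, hre₂⟩
    obtain ⟨s, hs, him⟩ := exists_mem_Icc_lerp_eq ⟨him₁, him₂⟩
    refine ⟨interpCoeffs am ap t s, fun i hi => interpCoeffs_mem_Icc ht hs (hle i hi), ?_⟩
    apply Complex.ext
    · rw [re_eval_I_mul_interpCoeffs, hre]
    · rw [im_eval_I_mul_interpCoeffs, him]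

/-- **The Kharitonov rectangle.** If the four Kharitonov polynomials of an
interval polynomial `P` of order `n` are Hurwitz stable and `a_n⁺ > 0`, then
for every `ω ≥ 0` the value set `K(iω) = {p(iω) : p ∈ P}` equals the rectangle
`{x + iy : h₋(ω) ≤ x ≤ h₊(ω), g₋(ω) ≤ y ≤ g₊(ω)}`. -/
theorem kharitonov_rectangle (n : ℕ) (am ap : ℕ → ℝ)
    (hle : ∀ i ≤ n, am i ≤ ap i) (hn : am n ≠ 0 ∨ ap n ≠ 0)
    (h1 : HurwitzStable ((polyOfCoeffs n (k1c am ap)).map (algebraMap ℝ ℂ)))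
    (h2 : HurwitzStable ((polyOfCoeffs n (k2c am ap)).map (algebraMap ℝ ℂ)))
    (h3 : HurwitzStable ((polyOfCoeffs n (k3c am ap)).map (algebraMap ℝ ℂ)))
    (h4 : HurwitzStable ((polyOfCoeffs n (k4c am ap)).map (algebraMap ℝ ℂ)))
    (hpos : 0 < ap n) (ω : ℝ) (hω : 0 ≤ ω) :
    {z : ℂ | ∃ a : ℕ → ℝ, (∀ i ≤ n, a i ∈ Set.Icc (am i) (ap i)) ∧
        z = ((polyOfCoeffs n a).map (algebraMap ℝ ℂ)).eval (Complex.I * ω)} =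
      {z : ℂ | hMinus n am ap ω ≤ z.re ∧ z.re ≤ hPlus n am ap ω ∧
        gMinus n am ap ω ≤ z.im ∧ z.im ≤ gPlus n am ap ω} :=
  kharitonov_rectangle_general n am ap hle ω hω
end

section
/- Positive Wronskian: Let f(ω) = h(ω) + i·g(ω) be a non-constant polynomial, where h and g are real polynomials. If all the roots of f lie in the open upper half-plane {z ∈ ℂ : Im z > 0}, then for every ω ∈ ℝ one has W[h,g](ω) = h(ω)g′(ω) − h′(ω)g(ω) > 0. -/
open Polynomial

/-!
For real `ω`, `f(ω) ≠ 0` and `f'(ω)/f(ω) = ∑ 1/(ω - z)` over the roots `z` of `f`; each summand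
has imaginary part `Im z / |ω - z|² > 0`. On the other hand, with `f = h + i g`,
`Im (f'(ω)/f(ω)) = (h g' - h' g)(ω) / |f(ω)|²`.
-/

namespace Complex

lemma im_one_div_ofReal_sub_pos {z : ℂ} (hz : 0 < z.im) (x : ℝ) : 0 < (1 / (x - z)).im := by
  have hne : (x : ℂ) - z ≠ 0 := fun h => hz.ne (by simpa using congrArg im (sub_eq_zero.1 h))
  rw [one_div, inv_im, sub_im, ofReal_im, zero_sub, neg_neg]
  exact div_pos hz (normSq_pos.2 hne)

lemma im_multiset_sum (s : Multiset ℂ) : s.sum.im = (s.map im).sum :=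
  map_multiset_sum imAddGroupHom s

end Complex

namespace Polynomial

lemma im_eval_derivative_div_eval_pos {f : ℂ[X]} (hf : f.natDegree ≠ 0)
    (hroots : ∀ z : ℂ, f.eval z = 0 → 0 < z.im) (x : ℝ) :
    0 < (f.derivative.eval (x : ℂ) / f.eval (x : ℂ)).im := by
  have hx : f.eval (x : ℂ) ≠ 0 := fun h => by simpa using hroots x h
  have hf0 : f ≠ 0 := by rintro rfl; simp at hf
  have hne : f.roots ≠ 0 := by
    rwa [Ne, ← Multiset.card_eq_zero, ← (IsAlgClosed.splits f).natDegree_eq_card_roots]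
  rw [(IsAlgClosed.splits f).eval_derivative_div_eval_of_ne_zero hx, Complex.im_multiset_sum,
    Multiset.map_map]
  simpa using Multiset.sum_lt_sum_of_nonempty (f := 0) hne fun z hz =>
    Complex.im_one_div_ofReal_sub_pos (hroots z ((mem_roots hf0).1 hz)) x

lemma derivative_map_add_C_I_mul_map (h g : ℝ[X]) :
    derivative (h.map (algebraMap ℝ ℂ) + C Complex.I * g.map (algebraMap ℝ ℂ)) =
      (derivative h).map (algebraMap ℝ ℂ) + C Complex.I * (derivative g).map (algebraMap ℝ ℂ) := by
  simp only [derivative_add, derivative_C_mul, derivative_map]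

lemma eval_ofReal_map_add_C_I_mul_map (h g : ℝ[X]) (x : ℝ) :
    (h.map (algebraMap ℝ ℂ) + C Complex.I * g.map (algebraMap ℝ ℂ)).eval (x : ℂ) =
      ⟨h.eval x, g.eval x⟩ := by
  rw [eval_add, eval_mul, eval_C, ← Complex.coe_algebraMap, eval_map_apply, eval_map_apply]
  apply Complex.ext <;> simp

end Polynomial

/-- **Positive Wronskian.** Let `f(ω) = h(ω) + i·g(ω)` be a non-constant
polynomial, where `h` and `g` are real polynomials.  If all the roots of `f`
lie in the open upper half-plane, then `W[h,g](ω) = h(ω)g′(ω) − h′(ω)g(ω) > 0`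
for every real `ω`. -/
theorem positive_wronskian (h g : Polynomial ℝ)
    (f : Polynomial ℂ)
    (hf : f = h.map (algebraMap ℝ ℂ) + Polynomial.C Complex.I * g.map (algebraMap ℝ ℂ))
    (hnc : f.natDegree ≠ 0)
    (hroots : ∀ z : ℂ, f.eval z = 0 → 0 < z.im) :
    ∀ ω : ℝ,
      0 < h.eval ω * (Polynomial.derivative g).eval ω
            - (Polynomial.derivative h).eval ω * g.eval ω := by
  intro ω
  have key := im_eval_derivative_div_eval_pos hnc hroots ω
  rw [hf, derivative_map_add_C_I_mul_map, eval_ofReal_map_add_C_I_mul_map,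
    eval_ofReal_map_add_C_I_mul_map, Complex.div_im, ← sub_div] at key
  obtain ⟨hW, -⟩ :=
    (div_pos_iff.1 key).resolve_right fun hneg => (Complex.normSq_nonneg _).not_gt hneg.2
  linarith
end

section
/- For the family of polynomials p_t(z) = a₁(t)z + a₀(t), t ∈ [0,1], with a₀(t) = 1 and a₁(t) = (2t−1)² − 1: (i) p₀(z) = p₁(z) = 1 is Hurwitz stable; (ii) p_t(iω) ≠ 0 for every (t,ω) ∈ [0,1] × ℝ; and (iii) for each t ∈ (0,1), p_t(z) is not Hurwitz stable, since its only root is z = −1/a₁(t) ∈ [1,∞). Hence the conclusion of the extended Boundary Crossing Theorem can fail if the leading coefficient is allowed to vanish at the left endpoint. -/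
open Polynomial

/-- The coefficient function `a₁(t) = (2t − 1)² − 1`. -/
noncomputable def a₁ (t : ℝ) : ℝ := (2 * t - 1) ^ 2 - 1

/-- The family `p_t(z) = a₁(t)·z + 1` with `a₁(t) = (2t − 1)² − 1`. -/
noncomputable def pFam (t : ℝ) : Polynomial ℂ :=
  Polynomial.C ((a₁ t : ℝ) : ℂ) * Polynomial.X + 1

/-! The family degenerates to the constant `1` exactly where `a₁` vanishes, i.e. at the
endpoints `t = 0, 1`; in between the single root `-1 / a₁ t` lies on the positive real axis,
while no root can ever be purely imaginary because the real part of `p_t(iω)` is `1`. -/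

theorem hurwitzStable_C {c : ℂ} (hc : c ≠ 0) : HurwitzStable (C c) :=
  fun z hz => absurd ((eval_C (x := z)).symm.trans hz) hc

theorem not_hurwitzStable_of_eval_eq_zero {p : ℂ[X]} {z : ℂ} (hz : p.eval z = 0)
    (hre : 0 ≤ z.re) : ¬ HurwitzStable p :=
  fun hp => (hp z hz).not_ge hre

theorem eval_C_mul_X_add_one_eq_zero_iff {K : Type*} [Field K] {a : K} (ha : a ≠ 0) (z : K) :
    (C a * X + 1).eval z = 0 ↔ z = -1 / a := by
  rw [eq_div_iff ha, eval_add, eval_mul, eval_C, eval_X, eval_one, mul_comm z,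
    add_eq_zero_iff_eq_neg]

theorem a₁_zero : a₁ 0 = 0 := by norm_num [a₁]

theorem a₁_one : a₁ 1 = 0 := by norm_num [a₁]

theorem a₁_neg_of_mem_Ioo {t : ℝ} (ht : t ∈ Set.Ioo 0 1) : a₁ t < 0 := by
  obtain ⟨ht0, ht1⟩ := ht
  unfold a₁
  nlinarith

theorem neg_one_le_a₁ (t : ℝ) : -1 ≤ a₁ t := by
  unfold a₁
  linarith [sq_nonneg (2 * t - 1)]

theorem one_le_neg_one_div_a₁ {t : ℝ} (ht : t ∈ Set.Ioo 0 1) : 1 ≤ -1 / a₁ t := by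
  rw [le_div_iff_of_neg (a₁_neg_of_mem_Ioo ht)]
  linarith [neg_one_le_a₁ t]

theorem pFam_eq_one_of_a₁_eq_zero {t : ℝ} (ht : a₁ t = 0) : pFam t = 1 := by
  simp [pFam, ht]

theorem re_eval_pFam_I_mul (t ω : ℝ) : ((pFam t).eval (Complex.I * ω)).re = 1 := by
  simp [pFam]

theorem eval_pFam_eq_zero_iff {t : ℝ} (ht : t ∈ Set.Ioo 0 1) (z : ℂ) :
    (pFam t).eval z = 0 ↔ z = ((-1 / a₁ t : ℝ) : ℂ) := by
  have ha : ((a₁ t : ℝ) : ℂ) ≠ 0 := Complex.ofReal_ne_zero.mpr (a₁_neg_of_mem_Ioo ht).ne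
  rw [pFam, eval_C_mul_X_add_one_eq_zero_iff ha]
  push_cast
  rfl

/-- For the family `p_t(z) = a₁(t)z + a₀(t)`, `t ∈ [0,1]`, with `a₀(t) = 1` and
`a₁(t) = (2t−1)² − 1`: (i) `p₀ = p₁ = 1` is Hurwitz stable; (ii) `p_t(iω) ≠ 0`
for all `(t,ω) ∈ [0,1] × ℝ`; (iii) for each `t ∈ (0,1)`, `p_t` is not Hurwitz
stable, its only root being `z = −1/a₁(t) ∈ [1,∞)`. -/
theorem boundary_crossing_fails_endpoints :
    (pFam 0 = 1 ∧ pFam 1 = 1 ∧ HurwitzStable (pFam 0) ∧ HurwitzStable (pFam 1)) ∧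
    (∀ t ∈ Set.Icc (0 : ℝ) 1, ∀ ω : ℝ, (pFam t).eval (Complex.I * ω) ≠ 0) ∧
    (∀ t ∈ Set.Ioo (0 : ℝ) 1, ¬ HurwitzStable (pFam t) ∧
      (∀ z : ℂ, (pFam t).eval z = 0 ↔ z = ((-1 / a₁ t : ℝ) : ℂ)) ∧
      (-1 / a₁ t) ∈ Set.Ici (1 : ℝ)) := by
  have h₀ := pFam_eq_one_of_a₁_eq_zero a₁_zero
  have h₁ := pFam_eq_one_of_a₁_eq_zero a₁_one
  have hstable : HurwitzStable 1 := by simpa using hurwitzStable_C one_ne_zero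
  refine ⟨⟨h₀, h₁, h₀ ▸ hstable, h₁ ▸ hstable⟩, ?_, ?_⟩
  · intro t _ ω h
    simpa [h] using re_eval_pFam_I_mul t ω
  · intro t ht
    have hroot := eval_pFam_eq_zero_iff ht
    have hge := one_le_neg_one_div_a₁ ht
    refine ⟨not_hurwitzStable_of_eval_eq_zero ((hroot _).mpr rfl) ?_, hroot, hge⟩
    rw [Complex.ofReal_re]
    linarith
end
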